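/- arXiv:math/0602118 — 3 statements merged into one kernel-verified Lean document; each statement's English description precedes it below -/
import Mathlib

section
/- If f : D → ℂⁿ is a bounded holomorphic map on the open unit disk with f(0) purely imaginary, satisfying |Im f(z)| ≤ R₁ on D and with nontangential boundary values satisfying |Re f| = R almost everywhere on ∂D, and R₁ < R, then a contradiction follows; equivalently, no such map exists when R₁ < R. -/
/-!
Let `F = ∑ⱼ fⱼ²`, which is holomorphic with `Re F = |Re f|² - |Im f|²`. By the mean value property,
on every circle of radius `r < 1` the average of `|Re f|²` equals `Re F(0)` plus the average of
`|Im f|²`, hence is at most `-|Im f(0)|² + R₁² ≤ R₁²`. Since `f` is bounded, dominated convergence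
lets `r → 1`, where these averages tend to `R²`. Thus `R ≤ R₁`.
-/

open MeasureTheory Metric Filter Topology Real Set

theorem Complex.re_sum_sq {ι : Type*} [Fintype ι] (w : ι → ℂ) :
    (∑ j, w j ^ 2).re = ∑ j, (w j).re ^ 2 - ∑ j, (w j).im ^ 2 := by
  simp only [Complex.re_sum, sq, Complex.mul_re, Finset.sum_sub_distrib]

theorem sum_re_sq_le_card_mul_norm_sq {ι : Type*} [Fintype ι] (w : ι → ℂ) :
    ∑ j, (w j).re ^ 2 ≤ Fintype.card ι * ‖w‖ ^ 2 := by
  calc ∑ j, (w j).re ^ 2 ≤ ∑ _j : ι, ‖w‖ ^ 2 := by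
        refine Finset.sum_le_sum fun j _ ↦ ?_
        rw [← sq_abs]
        exact pow_le_pow_left₀ (abs_nonneg _)
          ((Complex.abs_re_le_norm _).trans (norm_le_pi_norm w j)) 2
    _ = Fintype.card ι * ‖w‖ ^ 2 := by simp

theorem circleAverage_sum_re_sq_le {ι : Type*} [Fintype ι] {f : ℂ → ι → ℂ} {c : ℂ} {ρ r M : ℝ}
    (hf : DifferentiableOn ℂ f (ball c ρ)) (hr : |r| < ρ)
    (him : ∀ z ∈ ball c ρ, ∑ j, (f z j).im ^ 2 ≤ M) :
    circleAverage (fun z ↦ ∑ j, (f z j).re ^ 2) c r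
      ≤ ∑ j, (f c j).re ^ 2 - ∑ j, (f c j).im ^ 2 + M := by
  set F : ℂ → ℂ := fun z ↦ ∑ j, f z j ^ 2
  have hF : DifferentiableOn ℂ F (ball c ρ) :=
    DifferentiableOn.fun_sum fun j _ ↦ ((differentiable_apply j).comp_differentiableOn hf).pow 2
  have hsphere : sphere c |r| ⊆ ball c ρ := sphere_subset_ball hr
  have hmean : circleAverage (fun z ↦ (F z).re) c r = (F c).re := by
    have hFr : DiffContOnCl ℂ F (ball c |r|) :=
      hF.diffContOnCl_ball (closedBall_subset_ball hr)
    rw [← hFr.circleAverage]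
    exact Complex.reCLM.circleAverage_comp_comm
      ((hF.continuousOn.mono hsphere).circleIntegrable')
  have hcont : ContinuousOn (fun z ↦ ∑ j, (f z j).re ^ 2) (ball c ρ) := by
    have := hf.continuousOn
    fun_prop
  have hFre : ContinuousOn (fun z ↦ (F z).re) (ball c ρ) :=
    Complex.continuous_re.comp_continuousOn hF.continuousOn
  calc circleAverage (fun z ↦ ∑ j, (f z j).re ^ 2) c r
      ≤ circleAverage (fun z ↦ (F z).re + M) c r := by
        apply circleAverage_mono
        · exact (hcont.mono hsphere).circleIntegrable'
        · exact ((hFre.add continuousOn_const).mono hsphere).circleIntegrable'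
        · intro z hz
          have := him z (hsphere hz)
          simp only [F, Complex.re_sum_sq]
          linarith
    _ = (F c).re + M := by
        rw [circleAverage_fun_add, hmean, circleAverage_const]
        · exact (hFre.mono hsphere).circleIntegrable'
        · exact continuousOn_const.circleIntegrable'
    _ = _ := by simp only [F, Complex.re_sum_sq]

theorem tendsto_circleAverage_of_ae_tendsto_radial {E : Type*} [NormedAddCommGroup E]
    [NormedSpace ℝ E] [CompleteSpace E] {g : ℂ → E} {c : ℂ} {ρ C : ℝ} {L : E} (hρ : 0 < ρ)
    (hg : ContinuousOn g (ball c ρ)) (hC : ∀ z ∈ ball c ρ, ‖g z‖ ≤ C)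
    (hL : ∀ᵐ θ ∂(volume.restrict (Ioc 0 (2 * π))),
      Tendsto (fun r ↦ g (circleMap c r θ)) (𝓝[<] ρ) (𝓝 L)) :
    Tendsto (circleAverage g c) (𝓝[<] ρ) (𝓝 L) := by
  have hIoo : ∀ᶠ r in 𝓝[<] ρ, r ∈ Ioo 0 ρ := Ioo_mem_nhdsLT hρ
  have hmem : ∀ r ∈ Ioo 0 ρ, ∀ θ, circleMap c r θ ∈ ball c ρ := fun r hr θ ↦
    sphere_subset_ball hr.2 (circleMap_mem_sphere c hr.1.le θ)
  have hint : Tendsto (fun r ↦ ∫ θ in 0..2 * π, g (circleMap c r θ)) (𝓝[<] ρ)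
      (𝓝 (∫ _ in 0..2 * π, L)) := by
    refine intervalIntegral.tendsto_integral_filter_of_dominated_convergence (fun _ ↦ C) ?_ ?_
      intervalIntegrable_const ?_
    · filter_upwards [hIoo] with r hr
      exact (hg.comp_continuous (continuous_circleMap c r) (hmem r hr)).aestronglyMeasurable
    · filter_upwards [hIoo] with r hr
      exact ae_of_all _ fun θ _ ↦ hC _ (hmem r hr θ)
    · rw [uIoc_of_le two_pi_pos.le]
      exact (ae_restrict_iff' measurableSet_Ioc).mp hL
  have hconst : (2 * π)⁻¹ • ∫ _ in 0..2 * π, L = L := circleAverage_const L c 0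
  have := hint.const_smul (2 * π)⁻¹
  rw [hconst] at this
  exact this

/-- There is no bounded holomorphic map `f : D → ℂⁿ` with `f(0)` purely
imaginary, `|Im f| ≤ R₁` on `D`, and radial boundary values satisfying `|Re f| = R`
almost everywhere on `∂D`, when `R₁ < R`. -/
theorem stmt1 (n : ℕ) (R R₁ : ℝ) (hRR : R₁ < R)
    (f : ℂ → (Fin n → ℂ))
    (hf : DifferentiableOn ℂ f (Metric.ball 0 1))
    (hb : ∃ C, ∀ z ∈ Metric.ball (0:ℂ) 1, ‖f z‖ ≤ C)
    (h0 : ∀ j, (f 0 j).re = 0)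
    (him : ∀ z ∈ Metric.ball (0:ℂ) 1,
      Real.sqrt (∑ j, (f z j).im ^ 2) ≤ R₁)
    (hbd : ∀ᵐ (θ : ℝ) ∂(volume.restrict (Set.Ioc (0:ℝ) (2*Real.pi))),
      Filter.Tendsto
        (fun r : ℝ =>
          Real.sqrt (∑ j, (f ((r:ℂ) * Complex.exp ((θ:ℂ) * Complex.I)) j).re ^ 2))
        (nhdsWithin 1 (Set.Iio (1:ℝ))) (nhds R)) :
    False := by
  obtain ⟨C, hC⟩ := hb
  have hR₁ : 0 ≤ R₁ := (sqrt_nonneg _).trans (him 0 (mem_ball_self one_pos))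
  have him_sq (z) (hz : z ∈ ball (0 : ℂ) 1) : ∑ j, (f z j).im ^ 2 ≤ R₁ ^ 2 :=
    (sqrt_le_left hR₁).1 (him z hz)
  have hmean_le : ∀ r ∈ Ioo (0 : ℝ) 1,
      circleAverage (fun z ↦ ∑ j, (f z j).re ^ 2) 0 r ≤ R₁ ^ 2 := by
    intro r hr
    have := circleAverage_sum_re_sq_le hf (by rw [abs_of_pos hr.1]; exact hr.2) him_sq
    have him0 : 0 ≤ ∑ j, (f 0 j).im ^ 2 := by positivity
    simp only [h0, zero_pow two_ne_zero, Finset.sum_const_zero] at this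
    linarith
  have hlim : Tendsto (circleAverage (fun z ↦ ∑ j, (f z j).re ^ 2) 0) (𝓝[<] 1) (𝓝 (R ^ 2)) := by
    refine tendsto_circleAverage_of_ae_tendsto_radial (C := n * C ^ 2) one_pos
      (by have := hf.continuousOn; fun_prop) (fun z hz ↦ ?_) ?_
    · rw [norm_of_nonneg (by positivity)]
      calc _ ≤ Fintype.card (Fin n) * ‖f z‖ ^ 2 := sum_re_sq_le_card_mul_norm_sq (f z)
        _ ≤ n * C ^ 2 := by
          rw [Fintype.card_fin]
          gcongr
          exact hC z hz
    · filter_upwards [hbd] with θ hθ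
      simpa only [sq_sqrt (Finset.sum_nonneg fun _ _ ↦ sq_nonneg _), ← circleMap_zero]
        using hθ.pow 2
  have : R ^ 2 ≤ R₁ ^ 2 :=
    le_of_tendsto hlim (mem_of_superset (Ioo_mem_nhdsLT one_pos) hmean_le)
  nlinarith
end

section
/- Let μ(z) = Σ_{j=0}^{l} e^{α_j + m_j·z} be an exponential sum on ℂⁿ. Suppose at a point z there is an index set I ∋ 0 with |I| ≤ n such that {m_i}_{i∈I} is ℂ-linearly independent, Re(α_0 + m_0·z) = b(z) = max_j Re(α_j + m_j·z), and Re(α_j + m_j·z) ≤ b(z) − c' for all j ∉ I. If c' > log(Σ_{i∉I} |m_i·m_0^∨|), where m_0^∨ ∈ ℂⁿ satisfies m_0·m_0^∨ = 1 and m_j·m_0^∨ = 0 for j ∈ I \ {0}, then the directional derivative of μ at z in direction m_0^∨ is nonzero; hence z is not a critical point of μ. -/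
/-! Pairing with `m₀^∨` kills every dominant term except the one of index `0`, whose modulus is
`e^{b(z)}`. Each remaining term has modulus at most `e^{b(z) - c'} |m_j·m₀^∨|`, so together they
have modulus `< e^{b(z) - c'} e^{c'} = e^{b(z)}` and cannot cancel the leading term. -/

open Finset

theorem norm_sum_exp_mul_lt {ι : Type*} (s : Finset ι) (u w : ι → ℂ) (b c : ℝ)
    (hc : Real.log (∑ j ∈ s, ‖w j‖) < c) (hu : ∀ j ∈ s, (u j).re ≤ b - c) :
    ‖∑ j ∈ s, Complex.exp (u j) * w j‖ < Real.exp b :=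
  calc ‖∑ j ∈ s, Complex.exp (u j) * w j‖
      ≤ ∑ j ∈ s, Real.exp (b - c) * ‖w j‖ := by
        refine (norm_sum_le _ _).trans (sum_le_sum fun j hj => ?_)
        rw [norm_mul, Complex.norm_exp]
        gcongr
        exact hu j hj
    _ = Real.exp (b - c) * ∑ j ∈ s, ‖w j‖ := (mul_sum _ _ _).symm
    _ < Real.exp (b - c) * Real.exp c := by gcongr; exact Real.lt_exp_of_log_lt hc
    _ = Real.exp b := by rw [← Real.exp_add, sub_add_cancel]

theorem sum_exp_mul_ne_zero {ι : Type*} [Fintype ι] [DecidableEq ι] (s : Finset ι) {i₀ : ι}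
    (hi₀ : i₀ ∈ s) (u w : ι → ℂ) (c : ℝ) (hw₀ : w i₀ = 1) (hw : ∀ j ∈ s, j ≠ i₀ → w j = 0)
    (hc : Real.log (∑ j ∈ sᶜ, ‖w j‖) < c) (hgap : ∀ j ∉ s, (u j).re ≤ (u i₀).re - c) :
    ∑ j, Complex.exp (u j) * w j ≠ 0 := by
  have hlead : ∑ j ∈ s, Complex.exp (u j) * w j = Complex.exp (u i₀) :=
    (sum_eq_single_of_mem i₀ hi₀ fun j hj hji₀ => by simp [hw j hj hji₀]).trans (by simp [hw₀])
  have htail : ‖∑ j ∈ sᶜ, Complex.exp (u j) * w j‖ < ‖Complex.exp (u i₀)‖ := by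
    rw [Complex.norm_exp]
    exact norm_sum_exp_mul_lt _ u w _ c hc fun j hj => hgap j (mem_compl.mp hj)
  rw [← sum_add_sum_compl s, hlead]
  intro h
  rw [eq_neg_of_add_eq_zero_right h, norm_neg] at htail
  exact htail.false

theorem stmt3_general (n l : ℕ) (m : Fin (l+1) → Fin n → ℂ) (α : Fin (l+1) → ℂ)
    (z : Fin n → ℂ) (I : Finset (Fin (l+1))) (h0I : (0 : Fin (l+1)) ∈ I)
    (m0v : Fin n → ℂ)
    (hdual0 : (∑ k, m 0 k * m0v k) = 1)
    (hdualj : ∀ j ∈ I, j ≠ 0 → (∑ k, m j k * m0v k) = 0)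
    (c' : ℝ)
    (hc' : Real.log (∑ j ∈ Iᶜ, ‖∑ k, m j k * m0v k‖) < c')
    (hgap : ∀ j ∉ I,
      (α j + ∑ k, m j k * z k).re ≤ (α 0 + ∑ k, m 0 k * z k).re - c') :
    (∑ j, Complex.exp (α j + ∑ k, m j k * z k) * (∑ k, m j k * m0v k)) ≠ 0 :=
  sum_exp_mul_ne_zero I h0I (fun j => α j + ∑ k, m j k * z k) (fun j => ∑ k, m j k * m0v k) c'
    hdual0 hdualj hc' hgap

/-- Away from the `(n-1)`-skeleton, with the dominating exponents
`{m_i}_{i ∈ I}` (`0 ∈ I`, `|I| ≤ n`) ℂ-linearly independent and a dual vector `m₀^∨`,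
a gap `c' > log (Σ_{i∉I} |m_i·m₀^∨|)` forces the directional derivative of the
exponential sum in direction `m₀^∨` to be nonzero; hence `z` is not a critical point. -/
theorem stmt3 (n l : ℕ) (m : Fin (l+1) → Fin n → ℂ) (α : Fin (l+1) → ℂ)
    (z : Fin n → ℂ) (I : Finset (Fin (l+1))) (h0I : (0 : Fin (l+1)) ∈ I)
    (hcard : I.card ≤ n)
    (hli : LinearIndependent ℂ (fun i : I => m i))
    (m0v : Fin n → ℂ)
    (hdual0 : (∑ k, m 0 k * m0v k) = 1)
    (hdualj : ∀ j ∈ I, j ≠ 0 → (∑ k, m j k * m0v k) = 0)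
    (c' : ℝ)
    (hc' : Real.log (∑ j ∈ Iᶜ, ‖∑ k, m j k * m0v k‖) < c')
    (hmax : ∀ j, (α j + ∑ k, m j k * z k).re ≤ (α 0 + ∑ k, m 0 k * z k).re)
    (hgap : ∀ j ∉ I,
      (α j + ∑ k, m j k * z k).re ≤ (α 0 + ∑ k, m 0 k * z k).re - c') :
    (∑ j, Complex.exp (α j + ∑ k, m j k * z k) * (∑ k, m j k * m0v k)) ≠ 0 :=
  stmt3_general n l m α z I h0I m0v hdual0 hdualj c' hc' hgap
end

section
/- Let Δ ⊂ ℂⁿ be a k-simplex with vertices m_0 = 0, m_1, …, m_k (k ≤ n), and define Vol_ℂ(Δ) as the (2k)-volume of the simplex Δ^ℂ with vertices {0, m_1, Jm_1, …, m_k, Jm_k}, where J is multiplication by i. Then Vol_ℂ(Δ) is independent of which vertex of Δ is chosen as the base point 0 (i.e., translating Δ so any of its vertices is at the origin and forming the corresponding Δ^ℂ gives the same volume). -/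
open MeasureTheory

noncomputable instance (n : ℕ) : MeasurableSpace (EuclideanSpace ℂ (Fin n)) := borel _
instance (n : ℕ) : BorelSpace (EuclideanSpace ℂ (Fin n)) := ⟨rfl⟩

/-- The complexified volume `Vol_ℂ` of the simplex with edge vectors `w j` (from a chosen
base vertex): the `2l`-dimensional Hausdorff measure of the convex hull of
`{0} ∪ {w j} ∪ {i·w j}`. -/
noncomputable def volC {n : ℕ} (l : ℕ) (w : Fin l → EuclideanSpace ℂ (Fin n)) : ℝ :=
  (μH[(2 * l : ℝ)] (convexHull ℝ (insert (0 : EuclideanSpace ℂ (Fin n))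
    (Set.range w ∪ Set.range fun j => Complex.I • w j)))).toReal

/-
Let `w^a` be the edge vectors of the simplex seen from its vertex `a`, and `L_a : ℂᵏ → ℂⁿ` the
`ℂ`-linear map sending the standard basis to `w^a`. Then `Δ^ℂ` is the image under `L_a` of the
complexified standard simplex, and `L_b = L_a ∘ M` for an integer matrix `M` invertible over `ℤ`.
As a real map `M` has determinant `|det M|² = 1`, and the `2k`-dimensional Hausdorff measure of
`L_a '' s` is a fixed multiple of the Lebesgue measure of `s`, so replacing `s` by `M '' s` does not
change the volume.
-/

open Module Set Complex

theorem LinearMap.hausdorffMeasure_image_image {U V : Type*}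
    [NormedAddCommGroup U] [InnerProductSpace ℝ U] [FiniteDimensional ℝ U]
    [MeasurableSpace U] [BorelSpace U]
    [NormedAddCommGroup V] [InnerProductSpace ℝ V] [MeasurableSpace V] [BorelSpace V]
    (f : U →ₗ[ℝ] V) (M : U →ₗ[ℝ] U) (s : Set U) :
    μH[finrank ℝ U] (f '' (M '' s)) = ENNReal.ofReal |M.det| * μH[finrank ℝ U] (f '' s) := by
  rw [f.hausdorffMeasure_image, M.hausdorffMeasure_image, f.hausdorffMeasure_image,
    M.normDet_eq_abs_det, mul_left_comm]

theorem LinearMap.det_restrictScalars_complex {E : Type*} [AddCommGroup E] [Module ℂ E]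
    [Module.Free ℂ E] (f : E →ₗ[ℂ] E) :
    (f.restrictScalars ℝ).det = normSq f.det := by
  rw [LinearMap.det_restrictScalars, Algebra.norm_complex_apply]

section ComplexifiedSimplex

variable {ι E F : Type*} [AddCommGroup E] [Module ℂ E] [AddCommGroup F] [Module ℂ F]

/-- The paper's `Δ^ℂ` for the simplex with vertex `0` and edge vectors `w`. -/
def complexifiedSimplex (w : ι → E) : Set E :=
  convexHull ℝ (insert 0 (range w ∪ range fun j => I • w j))

theorem LinearMap.image_complexifiedSimplex (f : E →ₗ[ℂ] F) (w : ι → E) :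
    f '' complexifiedSimplex w = complexifiedSimplex (f ∘ w) := by
  rw [complexifiedSimplex, show ⇑f = ⇑(f.restrictScalars ℝ) from rfl,
    LinearMap.image_convexHull, image_insert_eq, image_union, ← Set.range_comp, ← Set.range_comp]
  simp [complexifiedSimplex, Function.comp_def]

theorem Module.Basis.constr_image_complexifiedSimplex (B : Basis ι ℂ E) (w : ι → F) :
    B.constr ℂ w '' complexifiedSimplex B = complexifiedSimplex w := by
  rw [LinearMap.image_complexifiedSimplex]
  congr 1
  funext j
  simp

end ComplexifiedSimplex

section ChangeOfBaseVertex

variable {k : ℕ}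

def edgeVectors {N : Type*} [AddCommGroup N] (v : Fin (k+1) → N) (a : Fin (k+1)) : Fin k → N :=
  fun j => v (a.succAbove j) - v a

/-- Coordinates of the vertex `c` in the affine frame of the simplex based at its vertex `a`. -/
def frameCoord (a c : Fin (k+1)) : Fin k → ℤ := fun i => if a.succAbove i = c then 1 else 0

@[simp]
theorem frameCoord_self (a : Fin (k+1)) : frameCoord a a = 0 := by
  funext i
  simp [frameCoord, Fin.succAbove_ne]

@[simp]
theorem frameCoord_succAbove (a : Fin (k+1)) (m : Fin k) :
    frameCoord a (a.succAbove m) = Pi.single m 1 := by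
  funext i
  simp [frameCoord, Pi.single_apply, Fin.succAbove_right_injective.eq_iff]

theorem sum_frameCoord_smul_edgeVectors {N : Type*} [AddCommGroup N] (v : Fin (k+1) → N)
    (a c : Fin (k+1)) : ∑ i, frameCoord a c i • edgeVectors v a i = v c - v a := by
  rcases eq_or_ne c a with rfl | hc
  · simp
  · obtain ⟨m, rfl⟩ := Fin.exists_succAbove_eq hc
    simp [Pi.single_apply, edgeVectors]

def changeOfBase (a b : Fin (k+1)) : Matrix (Fin k) (Fin k) ℤ :=
  Matrix.of fun i j => frameCoord a (b.succAbove j) i - frameCoord a b i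

theorem edgeVectors_eq_sum_changeOfBase {N : Type*} [AddCommGroup N] (v : Fin (k+1) → N)
    (a b : Fin (k+1)) (j : Fin k) :
    edgeVectors v b j = ∑ i, changeOfBase a b i j • edgeVectors v a i := by
  simp only [changeOfBase, Matrix.of_apply, sub_smul, Finset.sum_sub_distrib,
    sum_frameCoord_smul_edgeVectors]
  simp only [edgeVectors]
  abel

theorem changeOfBase_mul_changeOfBase (a b : Fin (k+1)) :
    changeOfBase a b * changeOfBase b a = 1 := by
  ext i j
  have h := congrFun (edgeVectors_eq_sum_changeOfBase (frameCoord a) b a j) i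
  simp [edgeVectors, changeOfBase, Matrix.mul_apply, Matrix.one_apply, Pi.single_apply,
    mul_comm] at h ⊢
  exact h.symm

theorem isUnit_det_changeOfBase (a b : Fin (k+1)) : IsUnit (changeOfBase a b).det :=
  IsUnit.of_mul_eq_one (changeOfBase b a).det <| by
    rw [← Matrix.det_mul, changeOfBase_mul_changeOfBase, Matrix.det_one]

theorem Module.Basis.constr_comp_toLin_changeOfBase {R E N : Type*} [CommRing R] [AddCommGroup E]
    [Module R E] [AddCommGroup N] [Module R N] (B : Basis (Fin k) R E) (v : Fin (k+1) → N)
    (a b : Fin (k+1)) :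
    B.constr R (edgeVectors v a) ∘ₗ Matrix.toLin B B ((changeOfBase a b).map (↑))
      = B.constr R (edgeVectors v b) := by
  refine B.ext fun j => ?_
  simp [Matrix.toLin_self, edgeVectors_eq_sum_changeOfBase v a b j, Int.cast_smul_eq_zsmul]

theorem abs_det_restrictScalars_toLin_changeOfBase {E : Type*} [AddCommGroup E] [Module ℂ E]
    (B : Basis (Fin k) ℂ E) (a b : Fin (k+1)) :
    |(LinearMap.restrictScalars ℝ (Matrix.toLin B B ((changeOfBase a b).map (↑)))).det| = 1 := by
  have : Module.Free ℂ E := .of_basis B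
  have hdet : ((changeOfBase a b).map (↑)).det = ((changeOfBase a b).det : ℂ) :=
    ((Int.castRingHom ℂ).map_det _).symm
  rw [LinearMap.det_restrictScalars_complex, LinearMap.det_toLin, hdet, normSq_intCast, ← sq,
    ← Int.cast_pow, Int.isUnit_sq (isUnit_det_changeOfBase a b)]
  simp

end ChangeOfBaseVertex

theorem stmt4_general (n k : ℕ)
    (v : Fin (k+1) → EuclideanSpace ℂ (Fin n)) (a b : Fin (k+1)) :
    volC k (fun j => v (a.succAbove j) - v a)
      = volC k (fun j => v (b.succAbove j) - v b) := by
  let B := (EuclideanSpace.basisFun (Fin k) ℂ).toBasis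
  let M := Matrix.toLin B B ((changeOfBase a b).map (↑))
  have hdim : (2 * k : ℝ) = finrank ℝ (EuclideanSpace ℂ (Fin k)) := by
    rw [← Module.finrank_mul_finrank ℝ ℂ, Complex.finrank_real_complex, finrank_euclideanSpace_fin]
    push_cast
    rfl
  change (μH[_] (complexifiedSimplex (edgeVectors v a))).toReal
    = (μH[_] (complexifiedSimplex (edgeVectors v b))).toReal
  rw [← B.constr_image_complexifiedSimplex (edgeVectors v a),
    ← B.constr_image_complexifiedSimplex (edgeVectors v b),
    ← B.constr_comp_toLin_changeOfBase v a b, LinearMap.coe_comp, image_comp, hdim]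
  have key := LinearMap.hausdorffMeasure_image_image
    ((B.constr ℂ (edgeVectors v a)).restrictScalars ℝ) (M.restrictScalars ℝ) (complexifiedSimplex B)
  rw [abs_det_restrictScalars_toLin_changeOfBase, ENNReal.ofReal_one, one_mul] at key
  simp only [LinearMap.coe_restrictScalars] at key
  rw [key]

/-- `Vol_ℂ(Δ)` is independent of the choice of base vertex of `Δ`:
for a `k`-simplex with vertices `v 0, …, v k` in `ℂⁿ` (`k ≤ n`), the complexified volume
computed with base vertex `v a` equals the one computed with base vertex `v b`. -/
theorem stmt4 (n k : ℕ) (hk : k ≤ n)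
    (v : Fin (k+1) → EuclideanSpace ℂ (Fin n)) (a b : Fin (k+1)) :
    volC k (fun j => v (a.succAbove j) - v a)
      = volC k (fun j => v (b.succAbove j) - v b) :=
  stmt4_general n k v a b
end
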